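/- Let Q be a finite quiver and 𝕂Q̄ its doubled path algebra with the standard double Poisson bracket and w := Σ_{a∈Q}(aa* − a*a). Then for every λ = Σ_{i∈Q₀} λ_i e_i ∈ R, the element w − λ is a noncommutative moment map for (𝕂Q̄, ⦃-,-⦄): for every p ∈ 𝕂Q̄, ⦃w − λ, p⦄ = Σ_{i∈Q₀}(pe_i⊗e_i − e_i⊗e_ip); equivalently, ⦃λ, p⦄ = 0 for all p ∈ 𝕂Q̄. -/

import Mathlib

/-! STATEMENT 17: for every λ = Σ λᵢeᵢ ∈ R, the element w − λ is a noncommutative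
moment map for (𝕂Q̄,⦃-,-⦄): ⦃w − λ, p⦄ = Σ_{i∈Q₀}(pe_i⊗e_i − e_i⊗e_ip) for all p;
equivalently ⦃λ,p⦄ = 0 for all p ∈ 𝕂Q̄. -/

open TensorProduct

noncomputable section

variable (K : Type) [Field K]

/-- The cyclic permutation `x ⊗ y ⊗ z ↦ y ⊗ z ⊗ x` on the triple tensor product. -/
def cyc132 (A : Type) [Ring A] [Algebra K A] :
    A ⊗[K] (A ⊗[K] A) →ₗ[K] A ⊗[K] (A ⊗[K] A) :=
  (TensorProduct.assoc K A A A).toLinearMap ∘ₗ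
    (TensorProduct.comm K A (A ⊗[K] A)).toLinearMap

/-- `⦃b, u ⊗ v⦄_L = ⦃b, u⦄ ⊗ v`. -/
def brExtL (A : Type) [Ring A] [Algebra K A]
    (f : A →ₗ[K] A ⊗[K] A) : A ⊗[K] A →ₗ[K] A ⊗[K] (A ⊗[K] A) :=
  (TensorProduct.assoc K A A A).toLinearMap ∘ₗ TensorProduct.map f LinearMap.id

/-- Outer bimodule structure: left multiplication `b · (u ⊗ v) = bu ⊗ v`. -/
def outL (A : Type) [Ring A] [Algebra K A] (b : A) :
    A ⊗[K] A →ₗ[K] A ⊗[K] A :=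
  TensorProduct.map (LinearMap.mulLeft K b) LinearMap.id

/-- Outer bimodule structure: right multiplication `(u ⊗ v) · c = u ⊗ vc`. -/
def outR (A : Type) [Ring A] [Algebra K A] (c : A) :
    A ⊗[K] A →ₗ[K] A ⊗[K] A :=
  TensorProduct.map LinearMap.id (LinearMap.mulRight K c)

/-- A double Poisson bracket (Van den Bergh) on an `R`-algebra `A`,
where `R = ⊕_{i ∈ I} 𝕂 e_i` is encoded by the family of idempotents `e : I → A`;
`R`-bilinearity is encoded by the vanishing `⦃e_i, -⦄ = 0`. -/
structure DoubleBracket (I : Type) (A : Type) [Ring A] [Algebra K A] (e : I → A) where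
  br : A →ₗ[K] A →ₗ[K] A ⊗[K] A
  skew : ∀ a b : A, br a b = - (TensorProduct.comm K A A) (br b a)
  leibniz : ∀ a b c : A,
    br a (b * c) = outR K A c (br a b) + outL K A b (br a c)
  jacobi : ∀ a b c : A,
    brExtL K A (br a) (br b c)
      + cyc132 K A (brExtL K A (br c) (br a b))
      + cyc132 K A (cyc132 K A (brExtL K A (br b) (br c a))) = 0
  e_vanish : ∀ (i : I) (a : A), br (e i) a = 0

/-- The span of commutators `[A,A]`. -/
def commSpan (A : Type) [Ring A] [Algebra K A] : Submodule K A :=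
  Submodule.span K {x : A | ∃ a b : A, x = a * b - b * a}

/-- Zeroth Hochschild homology `HH₀(A) = A/[A,A]`. -/
abbrev HH0 (A : Type) [Ring A] [Algebra K A] := A ⧸ commSpan K A

section PathAlgebra

/- A finite quiver `Q`: vertex set `V`, arrow set `E`, source `Qs`, target `Qt`.
The doubled quiver `Q̄` has arrows `E ⊕ E`: `Sum.inl a = a` and `Sum.inr a = a*`. -/
variable (V E : Type) [Fintype V] [DecidableEq V] [Fintype E] [DecidableEq E]
variable (Qs Qt : E → V)

/-- Source of a doubled arrow. -/
def sbar : E ⊕ E → V := Sum.elim Qs Qt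

/-- Target of a doubled arrow. -/
def tbar : E ⊕ E → V := Sum.elim Qt Qs

/-- The involution `a ↦ a*`, `a* ↦ a` on doubled arrows. -/
def dstar : E ⊕ E → E ⊕ E := Sum.elim Sum.inr Sum.inl

/-- The defining relations of the path algebra of the doubled quiver `Q̄`
(products of paths compose like functions: in `x * y` the path `y` comes first). -/
inductive PathRel :
    FreeAlgebra K (V ⊕ (E ⊕ E)) → FreeAlgebra K (V ⊕ (E ⊕ E)) → Prop
  | vert_mul (i j : V) :
      PathRel (FreeAlgebra.ι K (Sum.inl i) * FreeAlgebra.ι K (Sum.inl j))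
        (if i = j then FreeAlgebra.ι K (Sum.inl i) else 0)
  | vert_sum :
      PathRel (Finset.univ.sum fun i : V => FreeAlgebra.ι K (Sum.inl i)) 1
  | arr_left (x : E ⊕ E) :
      PathRel (FreeAlgebra.ι K (Sum.inl (tbar V E Qs Qt x)) * FreeAlgebra.ι K (Sum.inr x))
        (FreeAlgebra.ι K (Sum.inr x))
  | arr_right (x : E ⊕ E) :
      PathRel (FreeAlgebra.ι K (Sum.inr x) * FreeAlgebra.ι K (Sum.inl (sbar V E Qs Qt x)))
        (FreeAlgebra.ι K (Sum.inr x))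

/-- The path algebra `𝕂Q̄` of the doubled quiver, presented by generators and relations. -/
abbrev PathAlg := RingQuot (PathRel K V E Qs Qt)

/-- The trivial path (idempotent) `e_i` at a vertex `i`. -/
def vtx (i : V) : PathAlg K V E Qs Qt :=
  RingQuot.mkAlgHom K (PathRel K V E Qs Qt) (FreeAlgebra.ι K (Sum.inl i))

/-- The element of `𝕂Q̄` given by a doubled arrow. -/
def arr (x : E ⊕ E) : PathAlg K V E Qs Qt :=
  RingQuot.mkAlgHom K (PathRel K V E Qs Qt) (FreeAlgebra.ι K (Sum.inr x))

/-- The standard noncommutative moment map `w = Σ_{a ∈ Q} (a a* − a* a)` of `𝕂Q̄`. -/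
def ncw : PathAlg K V E Qs Qt :=
  Finset.univ.sum fun a : E =>
    arr K V E Qs Qt (Sum.inl a) * arr K V E Qs Qt (Sum.inr a)
      - arr K V E Qs Qt (Sum.inr a) * arr K V E Qs Qt (Sum.inl a)

/-- The condition that a double bracket on `𝕂Q̄` is the standard one:
`⦃a,a*⦄ = e_{s(a)} ⊗ e_{t(a)}`, `⦃a*,a⦄ = −e_{t(a)} ⊗ e_{s(a)}`, and `⦃f,g⦄ = 0`
for arrows `f ≠ g*`. -/
def IsQuiverBracket (D : DoubleBracket K V (PathAlg K V E Qs Qt) (vtx K V E Qs Qt)) :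
    Prop :=
  (∀ a : E,
    D.br (arr K V E Qs Qt (Sum.inl a)) (arr K V E Qs Qt (Sum.inr a))
      = vtx K V E Qs Qt (Qs a) ⊗ₜ[K] vtx K V E Qs Qt (Qt a))
  ∧ (∀ a : E,
    D.br (arr K V E Qs Qt (Sum.inr a)) (arr K V E Qs Qt (Sum.inl a))
      = - (vtx K V E Qs Qt (Qt a) ⊗ₜ[K] vtx K V E Qs Qt (Qs a)))
  ∧ (∀ f g : E ⊕ E, f ≠ dstar E g →
      D.br (arr K V E Qs Qt f) (arr K V E Qs Qt g) = 0)

end PathAlgebra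


section HelperLemmas
set_option linter.unusedSectionVars false

variable {K : Type} [Field K]
variable {V E : Type} [Fintype V] [DecidableEq V] [Fintype E] [DecidableEq E]
variable {Qs Qt : E → V}

lemma vtx_mul_vtx (i j : V) :
    vtx K V E Qs Qt i * vtx K V E Qs Qt j
      = if i = j then vtx K V E Qs Qt i else 0 := by
  have h := RingQuot.mkAlgHom_rel K (PathRel.vert_mul (K := K) (Qs := Qs) (Qt := Qt) i j)
  simp only [map_mul, apply_ite (RingQuot.mkAlgHom K (PathRel K V E Qs Qt)), map_zero] at h
  simpa [vtx] using h

lemma vtx_sum_eq_one :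
    (Finset.univ.sum fun i : V => vtx K V E Qs Qt i) = 1 := by
  have h := RingQuot.mkAlgHom_rel K (PathRel.vert_sum (K := K) (Qs := Qs) (Qt := Qt))
  simpa [vtx, map_sum] using h

lemma vtx_tbar_mul_arr (x : E ⊕ E) :
    vtx K V E Qs Qt (tbar V E Qs Qt x) * arr K V E Qs Qt x = arr K V E Qs Qt x := by
  have h := RingQuot.mkAlgHom_rel K (PathRel.arr_left (K := K) (Qs := Qs) (Qt := Qt) x)
  simpa [vtx, arr, map_mul] using h

lemma arr_mul_vtx_sbar (x : E ⊕ E) :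
    arr K V E Qs Qt x * vtx K V E Qs Qt (sbar V E Qs Qt x) = arr K V E Qs Qt x := by
  have h := RingQuot.mkAlgHom_rel K (PathRel.arr_right (K := K) (Qs := Qs) (Qt := Qt) x)
  simpa [vtx, arr, map_mul] using h

lemma vtx_mul_arr (i : V) (x : E ⊕ E) :
    vtx K V E Qs Qt i * arr K V E Qs Qt x
      = if i = tbar V E Qs Qt x then arr K V E Qs Qt x else 0 := by
  conv_lhs => rw [← vtx_tbar_mul_arr x, ← mul_assoc, vtx_mul_vtx]
  split
  · next h => rw [h, vtx_tbar_mul_arr]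
  · rw [zero_mul]

lemma arr_mul_vtx (x : E ⊕ E) (i : V) :
    arr K V E Qs Qt x * vtx K V E Qs Qt i
      = if sbar V E Qs Qt x = i then arr K V E Qs Qt x else 0 := by
  conv_lhs => rw [← arr_mul_vtx_sbar x, mul_assoc, vtx_mul_vtx]
  split
  · exact arr_mul_vtx_sbar x
  · rw [mul_zero]

variable (D : DoubleBracket K V (PathAlg K V E Qs Qt) (vtx K V E Qs Qt))

lemma br_vtx_right (p : PathAlg K V E Qs Qt) (i : V) :
    D.br p (vtx K V E Qs Qt i) = 0 := by
  rw [D.skew]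
  simp [D.e_vanish]

lemma comm_outR_comm {A : Type} [Ring A] [Algebra K A] (c : A) (t : A ⊗[K] A) :
    (TensorProduct.comm K A A) (outR K A c ((TensorProduct.comm K A A) t))
      = TensorProduct.map (LinearMap.mulRight K c) LinearMap.id t := by
  induction t using TensorProduct.induction_on with
  | zero => simp
  | tmul u v => simp [outR]
  | add x y hx hy => simp only [map_add, hx, hy]

lemma comm_outL_comm {A : Type} [Ring A] [Algebra K A] (b : A) (t : A ⊗[K] A) :
    (TensorProduct.comm K A A) (outL K A b ((TensorProduct.comm K A A) t))
      = TensorProduct.map LinearMap.id (LinearMap.mulLeft K b) t := by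
  induction t using TensorProduct.induction_on with
  | zero => simp
  | tmul u v => simp [outL]
  | add x y hx hy => simp only [map_add, hx, hy]

/-- Leibniz rule in the first argument, derived from skew-symmetry. -/
lemma br_mul_left (b c p : PathAlg K V E Qs Qt) :
    D.br (b * c) p
      = TensorProduct.map (LinearMap.mulRight K c) LinearMap.id (D.br b p)
        + TensorProduct.map LinearMap.id (LinearMap.mulLeft K b) (D.br c p) := by
  rw [D.skew (b * c) p, D.leibniz p b c, D.skew p b, D.skew p c]
  simp only [map_neg, map_add, neg_add, neg_neg]
  rw [comm_outR_comm, comm_outL_comm]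

lemma br_ncw_arr (hD : IsQuiverBracket K V E Qs Qt D) (x : E ⊕ E) :
    D.br (ncw K V E Qs Qt) (arr K V E Qs Qt x)
      = arr K V E Qs Qt x ⊗ₜ[K] vtx K V E Qs Qt (sbar V E Qs Qt x)
        - vtx K V E Qs Qt (tbar V E Qs Qt x) ⊗ₜ[K] arr K V E Qs Qt x := by
  obtain ⟨h1, h2, h3⟩ := hD
  rw [ncw, map_sum, LinearMap.sum_apply]
  cases x with
  | inl b =>
    have key : ∀ a : E,
        D.br (arr K V E Qs Qt (Sum.inl a) * arr K V E Qs Qt (Sum.inr a)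
              - arr K V E Qs Qt (Sum.inr a) * arr K V E Qs Qt (Sum.inl a))
            (arr K V E Qs Qt (Sum.inl b))
          = if a = b then
              (arr K V E Qs Qt (Sum.inl b) ⊗ₜ[K] vtx K V E Qs Qt (Qs b)
                - vtx K V E Qs Qt (Qt b) ⊗ₜ[K] arr K V E Qs Qt (Sum.inl b))
            else 0 := by
      intro a
      have hz : D.br (arr K V E Qs Qt (Sum.inl a)) (arr K V E Qs Qt (Sum.inl b)) = 0 :=
        h3 _ _ (by simp [dstar])
      by_cases hab : a = b
      · subst hab
        rw [map_sub, LinearMap.sub_apply, br_mul_left, br_mul_left, hz, h2 a]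
        simp only [map_zero, _root_.map_neg, TensorProduct.map_tmul, LinearMap.id_coe, id_eq,
          LinearMap.mulRight_apply, LinearMap.mulLeft_apply, zero_add, add_zero,
          vtx_mul_arr, arr_mul_vtx, sbar, tbar, Sum.elim_inl, Sum.elim_inr, if_pos rfl, if_true]
        rw [show ∀ t : PathAlg K V E Qs Qt ⊗[K] PathAlg K V E Qs Qt,
            map (LinearMap.mulRight K (arr K V E Qs Qt (Sum.inl a))) LinearMap.id (-t)
              = -(map (LinearMap.mulRight K (arr K V E Qs Qt (Sum.inl a))) LinearMap.id t)
            from fun t => _root_.map_neg (map (LinearMap.mulRight K (arr K V E Qs Qt (Sum.inl a))) LinearMap.id) t]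
        simp only [TensorProduct.map_tmul, LinearMap.id_coe, id_eq, LinearMap.mulRight_apply,
          vtx_mul_arr, tbar, Sum.elim_inl, if_pos rfl]
        try abel
      · have hz2 : D.br (arr K V E Qs Qt (Sum.inr a)) (arr K V E Qs Qt (Sum.inl b)) = 0 :=
          h3 _ _ (by simp [dstar, hab])
        rw [map_sub, LinearMap.sub_apply, br_mul_left, br_mul_left, hz, hz2]
        simp [hab]
    rw [Finset.sum_congr rfl fun a _ => key a]
    simp [sbar, tbar]
  | inr b =>
    have key : ∀ a : E,
        D.br (arr K V E Qs Qt (Sum.inl a) * arr K V E Qs Qt (Sum.inr a)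
              - arr K V E Qs Qt (Sum.inr a) * arr K V E Qs Qt (Sum.inl a))
            (arr K V E Qs Qt (Sum.inr b))
          = if a = b then
              (arr K V E Qs Qt (Sum.inr b) ⊗ₜ[K] vtx K V E Qs Qt (Qt b)
                - vtx K V E Qs Qt (Qs b) ⊗ₜ[K] arr K V E Qs Qt (Sum.inr b))
            else 0 := by
      intro a
      have hz : D.br (arr K V E Qs Qt (Sum.inr a)) (arr K V E Qs Qt (Sum.inr b)) = 0 :=
        h3 _ _ (by simp [dstar])
      by_cases hab : a = b
      · subst hab
        rw [map_sub, LinearMap.sub_apply, br_mul_left, br_mul_left, hz, h1 a]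
        simp only [map_zero, map_neg, TensorProduct.map_tmul, LinearMap.id_coe, id_eq,
          LinearMap.mulRight_apply, LinearMap.mulLeft_apply, zero_add, add_zero,
          vtx_mul_arr, arr_mul_vtx, sbar, tbar, Sum.elim_inl, Sum.elim_inr, if_pos rfl, if_true]
        try abel
      · have hz2 : D.br (arr K V E Qs Qt (Sum.inl a)) (arr K V E Qs Qt (Sum.inr b)) = 0 :=
          h3 _ _ (by simp [dstar, hab])
        rw [map_sub, LinearMap.sub_apply, br_mul_left, br_mul_left, hz, hz2]
        simp [hab]
    rw [Finset.sum_congr rfl fun a _ => key a]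
    simp [sbar, tbar]

end HelperLemmas

theorem statement17
    (V E : Type) [Fintype V] [DecidableEq V] [Fintype E] [DecidableEq E]
    (Qs Qt : E → V)
    (D : DoubleBracket K V (PathAlg K V E Qs Qt) (vtx K V E Qs Qt))
    (hD : IsQuiverBracket K V E Qs Qt D)
    (lam : V → K) :
    -- `w − λ` is a noncommutative moment map:
    (∀ p : PathAlg K V E Qs Qt,
      D.br (ncw K V E Qs Qt - Finset.univ.sum fun i : V => lam i • vtx K V E Qs Qt i) p
        = Finset.univ.sum fun i : V =>
            ((p * vtx K V E Qs Qt i) ⊗ₜ[K] vtx K V E Qs Qt i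
              - vtx K V E Qs Qt i ⊗ₜ[K] (vtx K V E Qs Qt i * p)))
    -- equivalently, `⦃λ, p⦄ = 0` for all `p`:
    ∧ (∀ p : PathAlg K V E Qs Qt,
        D.br (Finset.univ.sum fun i : V => lam i • vtx K V E Qs Qt i) p = 0) := by
  have lam0 : ∀ p : PathAlg K V E Qs Qt,
      D.br (Finset.univ.sum fun i : V => lam i • vtx K V E Qs Qt i) p = 0 := by
    intro p
    rw [map_sum, LinearMap.sum_apply]
    simp [map_smul, D.e_vanish]
  refine ⟨?_, lam0⟩
  intro p
  rw [map_sub, LinearMap.sub_apply, lam0, sub_zero]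
  obtain ⟨q, rfl⟩ := RingQuot.mkAlgHom_surjective K (PathRel K V E Qs Qt) p
  induction q using FreeAlgebra.induction with
  | grade0 r =>
    rw [AlgHom.commutes]
    have hL : D.br (ncw K V E Qs Qt) ((algebraMap K (PathAlg K V E Qs Qt)) r) = 0 := by
      rw [Algebra.algebraMap_eq_smul_one,
        ← vtx_sum_eq_one (K := K) (V := V) (E := E) (Qs := Qs) (Qt := Qt),
        Finset.smul_sum, map_sum]
      refine Finset.sum_eq_zero fun i _ => ?_
      rw [map_smul, br_vtx_right, smul_zero]
    rw [hL]
    symm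
    refine Finset.sum_eq_zero fun i _ => ?_
    rw [← Algebra.commutes r (vtx K V E Qs Qt i), ← Algebra.smul_def,
      TensorProduct.smul_tmul]
    exact sub_self _
  | grade1 x =>
    cases x with
    | inl i =>
      rw [show RingQuot.mkAlgHom K (PathRel K V E Qs Qt) (FreeAlgebra.ι K (Sum.inl i))
            = vtx K V E Qs Qt i from rfl]
      rw [br_vtx_right]
      symm
      have : ∀ j : V, (vtx K V E Qs Qt i * vtx K V E Qs Qt j) ⊗ₜ[K] vtx K V E Qs Qt j
            - vtx K V E Qs Qt j ⊗ₜ[K] (vtx K V E Qs Qt j * vtx K V E Qs Qt i)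
          = (if i = j then vtx K V E Qs Qt i ⊗ₜ[K] vtx K V E Qs Qt i else 0)
            - (if j = i then vtx K V E Qs Qt i ⊗ₜ[K] vtx K V E Qs Qt i else 0) := by
        intro j
        rw [vtx_mul_vtx, vtx_mul_vtx]
        by_cases h : i = j
        · subst h; simp
        · simp [h, Ne.symm h]
      rw [Finset.sum_congr rfl fun j _ => this j]
      exact Finset.sum_eq_zero fun j _ => by simp only [@eq_comm _ j i]; exact sub_self _
    | inr x =>
      rw [show RingQuot.mkAlgHom K (PathRel K V E Qs Qt) (FreeAlgebra.ι K (Sum.inr x))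
            = arr K V E Qs Qt x from rfl]
      rw [br_ncw_arr D hD x]
      symm
      have : ∀ j : V, (arr K V E Qs Qt x * vtx K V E Qs Qt j) ⊗ₜ[K] vtx K V E Qs Qt j
            - vtx K V E Qs Qt j ⊗ₜ[K] (vtx K V E Qs Qt j * arr K V E Qs Qt x)
          = (if sbar V E Qs Qt x = j then arr K V E Qs Qt x ⊗ₜ[K] vtx K V E Qs Qt j else 0)
            - (if j = tbar V E Qs Qt x then vtx K V E Qs Qt j ⊗ₜ[K] arr K V E Qs Qt x else 0) := by
        intro j
        rw [arr_mul_vtx, vtx_mul_arr]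
        by_cases h1 : sbar V E Qs Qt x = j <;> by_cases h2 : j = tbar V E Qs Qt x <;>
          simp [h1, h2, TensorProduct.ite_tmul, TensorProduct.tmul_ite]
      rw [Finset.sum_congr rfl fun j _ => this j]
      rw [show (∑ j : V, ((if sbar V E Qs Qt x = j then arr K V E Qs Qt x ⊗ₜ[K] vtx K V E Qs Qt j else 0)
            - (if j = tbar V E Qs Qt x then vtx K V E Qs Qt j ⊗ₜ[K] arr K V E Qs Qt x else 0)))
          = (∑ j : V, (if sbar V E Qs Qt x = j then arr K V E Qs Qt x ⊗ₜ[K] vtx K V E Qs Qt j else 0))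
            - ∑ j : V, (if j = tbar V E Qs Qt x then vtx K V E Qs Qt j ⊗ₜ[K] arr K V E Qs Qt x else 0)
          from Finset.sum_sub_distrib
            (fun j => if sbar V E Qs Qt x = j then arr K V E Qs Qt x ⊗ₜ[K] vtx K V E Qs Qt j else 0)
            (fun j => if j = tbar V E Qs Qt x then vtx K V E Qs Qt j ⊗ₜ[K] arr K V E Qs Qt x else 0)]
      simp [Finset.sum_ite_eq, Finset.sum_ite_eq']
  | mul a b ha hb =>
    rw [map_mul, D.leibniz, ha, hb, map_sum, map_sum, ← Finset.sum_add_distrib]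
    refine Finset.sum_congr rfl fun i _ => ?_
    simp only [map_sub, outR, outL, TensorProduct.map_tmul, LinearMap.id_coe, id_eq,
      LinearMap.mulRight_apply, LinearMap.mulLeft_apply, mul_assoc]
    abel
  | add a b ha hb =>
    rw [map_add, map_add, ha, hb, ← Finset.sum_add_distrib]
    refine Finset.sum_congr rfl fun i _ => ?_
    simp only [add_mul, mul_add, TensorProduct.add_tmul, TensorProduct.tmul_add]
    abel


end
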